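/- The off-diagonal square bound B^off_□(ρ,ψ) ≥ 0 is sharp: on a 4-cycle there exist ρ with ρᵢ = 1 for all i and a non-constant ψ with alternating sum ψ(x₁)−ψ(x₂)+ψ(x₃)−ψ(x₄) = 0 such that B^off_□(ρ,ψ) = 0 while A_□(ρ,ψ) = (μ/d)Σᵢ gᵢ² θ(ρᵢ,ρ_{i+1}) > 0. -/

import Mathlib

/-- The logarithmic mean `θ(s,t) = ∫₀¹ s^(1-p) t^p dp`. -/
noncomputable def logMean (s t : ℝ) : ℝ := ∫ p in (0:ℝ)..1, s ^ (1 - p) * t ^ p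

/-- Partial derivative of the logarithmic mean in the first argument. -/
noncomputable def logMean₁ (s t : ℝ) : ℝ := deriv (fun u => logMean u t) s

/-- Partial derivative of the logarithmic mean in the second argument. -/
noncomputable def logMean₂ (s t : ℝ) : ℝ := deriv (fun v => logMean s v) t

/-- The deficit `D(s,t;u,v) = u ∂₁θ(s,t) + v ∂₂θ(s,t) - θ(u,v)` in the four-point
inequality for the logarithmic mean. -/
noncomputable def logMeanDeficit (s t u v : ℝ) : ℝ :=
  u * logMean₁ s t + v * logMean₂ s t - logMean u v

/-!
`θ` is symmetric and positively homogeneous of degree one, so Euler's relation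
`s ∂₁θ(s,t) + t ∂₂θ(s,t) = θ(s,t)` says exactly that `D(s,t;s,t) = 0`; in particular
`D(1,1;1,1) = 0`. With `ρ ≡ 1` the first term of `B^off_□` carries `(g₁ + g₃)²`, and
`g₁ + g₃` is minus the alternating sum of `ψ`. Hence `B^off_□ = 0` for every `ψ` with
vanishing alternating sum, such as `ψ = (0, 1, 1, 0)`, while `A_□ = (μ/d) Σ gᵢ² > 0` as
soon as `ψ` is not constant.
-/

open Set Filter intervalIntegral

theorem logMean_comm (s t : ℝ) : logMean s t = logMean t s := by
  simpa [logMean, mul_comm] using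
    integral_comp_sub_left (a := 0) (b := 1) (fun p : ℝ => t ^ (1 - p) * s ^ p) (1 : ℝ)

theorem logMean_self {s : ℝ} (hs : 0 < s) : logMean s s = s := by
  simp [logMean, ← Real.rpow_add hs]

theorem hasDerivAt_logMean_left {s t : ℝ} (hs : 0 < s) (ht : 0 < t) :
    HasDerivAt (fun u => logMean u t) (∫ p in (0 : ℝ)..1, (1 - p) * s ^ (-p) * t ^ p) s := by
  refine (intervalIntegral.hasDerivAt_integral_of_dominated_loc_of_deriv_le
    (F := fun u p => u ^ (1 - p) * t ^ p) (F' := fun u p => (1 - p) * u ^ (-p) * t ^ p)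
    (Ioi_mem_nhds (half_lt_self hs))
    ((eventually_gt_nhds hs).mono fun u hu => ?_) ?_ ?_ ?_ (bound := fun p : ℝ => (s / 2) ^ (-p) * t ^ p) ?_ ?_).2
  · exact (by fun_prop (disch := positivity) :
      Continuous fun p : ℝ => u ^ (1 - p) * t ^ p).aestronglyMeasurable
  · exact (by fun_prop (disch := positivity) :
      Continuous fun p : ℝ => s ^ (1 - p) * t ^ p).intervalIntegrable 0 1
  · exact (by fun_prop (disch := positivity) :
      Continuous fun p : ℝ => (1 - p) * s ^ (-p) * t ^ p).aestronglyMeasurable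
  · refine Eventually.of_forall fun p hp u hu => ?_
    rw [uIoc_of_le zero_le_one] at hp
    have hu' : s / 2 < u := hu
    have hu0 : 0 < u := (half_pos hs).trans hu'
    have hp1 : 0 ≤ 1 - p := by linarith [hp.2]
    have hpow : u ^ (-p) ≤ (s / 2) ^ (-p) :=
      Real.rpow_le_rpow_of_nonpos (by positivity) hu'.le (by linarith [hp.1])
    rw [Real.norm_eq_abs, abs_of_nonneg (by positivity)]
    calc (1 - p) * u ^ (-p) * t ^ p ≤ 1 * (s / 2) ^ (-p) * t ^ p := by
          gcongr
          linarith [hp.1]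
      _ = (s / 2) ^ (-p) * t ^ p := by rw [one_mul]
  · exact (by fun_prop (disch := positivity) :
      Continuous fun p : ℝ => (s / 2) ^ (-p) * t ^ p).intervalIntegrable 0 1
  · refine Eventually.of_forall fun p _ u hu => ?_
    have hu' : 0 < u := (half_pos hs).trans hu
    simpa [sub_sub_cancel_left, mul_comm, mul_assoc] using
      (Real.hasDerivAt_rpow_const (p := 1 - p) (Or.inl hu'.ne')).mul_const (t ^ p)

theorem logMean₁_eq {s t : ℝ} (hs : 0 < s) (ht : 0 < t) :
    logMean₁ s t = ∫ p in (0 : ℝ)..1, (1 - p) * s ^ (-p) * t ^ p :=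
  (hasDerivAt_logMean_left hs ht).deriv

theorem logMean₂_eq_logMean₁ (s t : ℝ) : logMean₂ s t = logMean₁ t s := by
  simp only [logMean₂, logMean₁, logMean_comm s]

theorem mul_logMean₁ {s t : ℝ} (hs : 0 < s) (ht : 0 < t) :
    s * logMean₁ s t = ∫ p in (0 : ℝ)..1, (1 - p) * (s ^ (1 - p) * t ^ p) := by
  rw [logMean₁_eq hs ht, ← integral_const_mul]
  refine integral_congr fun p _ => ?_
  simp only [sub_eq_add_neg, Real.rpow_add hs, Real.rpow_one]
  ring

theorem logMeanDeficit_self_self {s t : ℝ} (hs : 0 < s) (ht : 0 < t) :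
    logMeanDeficit s t s t = 0 := by
  have hsnd : t * logMean₂ s t = ∫ p in (0 : ℝ)..1, p * (s ^ (1 - p) * t ^ p) := by
    rw [logMean₂_eq_logMean₁, mul_logMean₁ ht hs]
    simpa [mul_comm] using
      integral_comp_sub_left (a := 0) (b := 1) (fun p : ℝ => p * (s ^ (1 - p) * t ^ p)) (1 : ℝ)
  rw [logMeanDeficit, mul_logMean₁ hs ht, hsnd, ← integral_add, logMean, sub_eq_zero]
  · exact integral_congr fun p _ => by ring
  all_goals exact (by fun_prop (disch := positivity) : Continuous _).intervalIntegrable 0 1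

/-- Sharpness of `B^off_□ ≥ 0` on a square: with `ρ ≡ 1` there is a non-constant
`ψ` with vanishing alternating sum such that `B^off_□(ρ,ψ) = 0` while
`A_□(ρ,ψ) > 0`. Here `gᵢ = ψ(x_{i+1}) - ψ(xᵢ)` cyclically on `ZMod 4`. -/
theorem square_offdiag_sharp (μ d : ℝ) (hμ : 0 < μ) (hd : 0 < d) :
    ∃ ψ : ZMod 4 → ℝ, (¬ ∃ c : ℝ, ∀ i, ψ i = c) ∧
      (ψ 0 - ψ 1 + ψ 2 - ψ 3 = 0) ∧
      ((μ / (2*d^2)) * ((ψ 1 - ψ 0) + (ψ 3 - ψ 2))^2 *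
            (∑ i : ZMod 4, logMean ((1:ℝ)) ((1:ℝ)))
          + (μ / (2*d^2)) * ∑ i : ZMod 4, (ψ (i+1) - ψ i)^2 *
              logMeanDeficit 1 1 1 1 = 0) ∧
      (μ / d) * ∑ i : ZMod 4, (ψ (i+1) - ψ i)^2 * logMean 1 1 > 0 := by
  let ψ : ZMod 4 → ℝ := ![0, 1, 1, 0]
  obtain ⟨h0, h1, h2, h3⟩ : ψ 0 = 0 ∧ ψ 1 = 1 ∧ ψ 2 = 1 ∧ ψ 3 = 0 := ⟨rfl, rfl, rfl, rfl⟩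
  have h_alt : ψ 0 - ψ 1 + ψ 2 - ψ 3 = 0 := by rw [h0, h1, h2, h3]; norm_num
  refine ⟨ψ, fun ⟨c, hc⟩ => ?_, h_alt, ?_, ?_⟩
  · exact zero_ne_one (h0.symm.trans ((hc 0).trans ((hc 1).symm.trans h1)))
  · rw [show ψ 1 - ψ 0 + (ψ 3 - ψ 2) = 0 by linarith, logMeanDeficit_self_self one_pos one_pos]
    simp
  · rw [logMean_self one_pos]
    refine mul_pos (div_pos hμ hd)
      (Finset.sum_pos' (fun i _ => by positivity) ⟨0, Finset.mem_univ _, ?_⟩)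
    rw [zero_add, h0, h1]
    norm_num
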